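/- arXiv:2111.08371 — 7 statements merged into one kernel-verified Lean document; each statement's English description precedes it below -/
import Mathlib

section
/- For every finite simple graph G without isolated vertices there exists a dominating set D of G with |D| = γ(G) such that every vertex u ∈ D has at least one private neighbor, i.e. D is a canonical minimum dominating set. -/
/-- `D` is a dominating set of `G`: every vertex outside `D` has a neighbor in `D`. -/
def Dominates {α : Type*} (G : SimpleGraph α) (D : Finset α) : Prop :=
  ∀ v ∉ D, ∃ u ∈ D, G.Adj u v

/-- The domination number `γ(G)`: the minimum cardinality of a dominating set. -/
noncomputable def gamma {α : Type*} (G : SimpleGraph α) : ℕ :=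
  sInf {n : ℕ | ∃ D : Finset α, Dominates G D ∧ D.card = n}

/-- `v` is a private neighbor of `u` with respect to `D`:
`v ∉ D`, `u ∼ v`, and `N(v) ∩ D = {u}`. -/
def PrivateNbr {α : Type*} (G : SimpleGraph α) (D : Finset α) (u v : α) : Prop :=
  v ∉ D ∧ G.Adj u v ∧ ∀ w ∈ D, G.Adj w v → w = u

/-- `D` is canonical: every member of `D` has at least one private neighbor. -/
def Canonical {α : Type*} (G : SimpleGraph α) (D : Finset α) : Prop :=
  ∀ u ∈ D, ∃ v, PrivateNbr G D u v

/-- For every finite simple graph without isolated vertices there is a canonical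
minimum dominating set. -/
theorem canonical_minimum_dominating_set_exists {α : Type*} [Fintype α]
    (G : SimpleGraph α) (hG : ∀ v : α, ∃ w : α, G.Adj v w) :
    ∃ D : Finset α, Dominates G D ∧ D.card = gamma G ∧ Canonical G D := by
  classical
  have huniv : Dominates G Finset.univ := fun v hv => absurd (Finset.mem_univ v) hv
  have hne : {n : ℕ | ∃ D : Finset α, Dominates G D ∧ D.card = n}.Nonempty :=
    ⟨_, Finset.univ, huniv, rfl⟩
  have hmem : ∃ D : Finset α, Dominates G D ∧ D.card = gamma G := Nat.sInf_mem hne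
  set e : Finset α → ℕ := fun S => ((S ×ˢ S).filter fun p => G.Adj p.1 p.2).card with he
  let 𝒮 : Finset (Finset α) := Finset.univ.filter fun D => Dominates G D ∧ D.card = gamma G
  have h𝒮ne : 𝒮.Nonempty := by
    obtain ⟨D, hD, hc⟩ := hmem
    exact ⟨D, by simp [𝒮, hD, hc]⟩
  obtain ⟨D, hDS, hmax⟩ := 𝒮.exists_max_image e h𝒮ne
  have hD : Dominates G D ∧ D.card = gamma G := by simpa [𝒮] using hDS
  refine ⟨D, hD.1, hD.2, ?_⟩
  intro u hu
  by_contra hno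
  simp only [PrivateNbr, not_exists, not_and, not_forall] at hno
  push_neg at hno
  -- hno : ∀ v, v ∉ D → G.Adj u v → ∃ w ∈ D, G.Adj w v ∧ w ≠ u
  -- Step 1: u has no neighbor inside D
  have hiso : ∀ w ∈ D, ¬ G.Adj u w := by
    intro w hw hadj
    have hwu : w ≠ u := fun h => G.irrefl (h ▸ hadj)
    have hdom' : Dominates G (D.erase u) := by
      intro v hv
      by_cases hvu : v = u
      · exact ⟨w, Finset.mem_erase.mpr ⟨hwu, hw⟩, hvu ▸ hadj.symm⟩
      · have hvD : v ∉ D := fun h => hv (Finset.mem_erase.mpr ⟨hvu, h⟩)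
        obtain ⟨x, hx, hxadj⟩ := hD.1 v hvD
        by_cases hxu : x = u
        · obtain ⟨y, hy, hyadj, hyne⟩ := hno v hvD (hxu ▸ hxadj)
          exact ⟨y, Finset.mem_erase.mpr ⟨hyne, hy⟩, hyadj⟩
        · exact ⟨x, Finset.mem_erase.mpr ⟨hxu, hx⟩, hxadj⟩
    have hle : gamma G ≤ (D.erase u).card := Nat.sInf_le ⟨_, hdom', rfl⟩
    have hlt : (D.erase u).card < D.card := Finset.card_erase_lt_of_mem hu
    omega
  -- Step 2: a neighbor w of u, necessarily outside D, with another dominator x ≠ u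
  obtain ⟨w, hw⟩ := hG u
  have hwD : w ∉ D := fun h => hiso w h hw
  have hwu : w ≠ u := fun h => G.irrefl (h ▸ hw)
  obtain ⟨x, hxD, hxw, hxu⟩ := hno w hwD hw
  -- Step 3: the swapped set D'
  set D' : Finset α := insert w (D.erase u) with hD'def
  have hcard' : D'.card = D.card := by
    have hwe : w ∉ D.erase u := fun h => hwD (Finset.mem_of_mem_erase h)
    rw [hD'def, Finset.card_insert_of_notMem hwe, Finset.card_erase_of_mem hu]
    have : 1 ≤ D.card := Finset.card_pos.mpr ⟨u, hu⟩
    omega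
  have hdom' : Dominates G D' := by
    intro v hv
    by_cases hvu : v = u
    · exact ⟨w, Finset.mem_insert_self _ _, hvu ▸ hw.symm⟩
    · have hvD : v ∉ D := fun h =>
        hv (Finset.mem_insert_of_mem (Finset.mem_erase.mpr ⟨hvu, h⟩))
      obtain ⟨y, hy, hyadj⟩ := hD.1 v hvD
      by_cases hyu : y = u
      · obtain ⟨z, hz, hzadj, hzne⟩ := hno v hvD (hyu ▸ hyadj)
        exact ⟨z, Finset.mem_insert_of_mem (Finset.mem_erase.mpr ⟨hzne, hz⟩), hzadj⟩
      · exact ⟨y, Finset.mem_insert_of_mem (Finset.mem_erase.mpr ⟨hyu, hy⟩), hyadj⟩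
  have hD'S : D' ∈ 𝒮 := by simp [𝒮, hdom', hcard', hD.2]
  have hle : e D' ≤ e D := hmax D' hD'S
  -- e D = e (D.erase u)
  have hset : ((D ×ˢ D).filter fun p => G.Adj p.1 p.2)
      = (((D.erase u) ×ˢ (D.erase u)).filter fun p => G.Adj p.1 p.2) := by
    ext ⟨a, b⟩
    simp only [Finset.mem_filter, Finset.mem_product, Finset.mem_erase]
    constructor
    · rintro ⟨⟨h1, h2⟩, hadj⟩
      refine ⟨⟨⟨?_, h1⟩, ?_, h2⟩, hadj⟩
      · rintro rfl; exact hiso b h2 hadj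
      · rintro rfl; exact hiso a h1 hadj.symm
    · rintro ⟨⟨⟨_, h1⟩, _, h2⟩, hadj⟩
      exact ⟨⟨h1, h2⟩, hadj⟩
  have heq : e D = e (D.erase u) := congrArg Finset.card hset
  -- e (D.erase u) < e D'
  have hlt : e (D.erase u) < e D' := by
    apply Finset.card_lt_card
    rw [Finset.ssubset_iff_of_subset]
    · refine ⟨(x, w), ?_, ?_⟩
      · simp only [Finset.mem_filter, Finset.mem_product]
        refine ⟨⟨Finset.mem_insert_of_mem (Finset.mem_erase.mpr ⟨hxu, hxD⟩),
          Finset.mem_insert_self _ _⟩, hxw⟩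
      · simp only [Finset.mem_filter, Finset.mem_product, Finset.mem_erase]
        rintro ⟨⟨_, _, hwDmem⟩, _⟩
        exact hwD hwDmem
    · apply Finset.filter_subset_filter
      apply Finset.product_subset_product <;> exact Finset.subset_insert _ _
  omega
end

section
/- Let G be a finite simple graph without isolated vertices and let D be a minimum dominating set of G that maximizes the number of edges of the subgraph induced by D among all minimum dominating sets. Then every u ∈ D has at least one private neighbor. -/
/-- The number of edges of the subgraph of `G` induced by `D`. -/
noncomputable def inducedEdges {α : Type*} (G : SimpleGraph α) (D : Finset α) : ℕ :=
  ((G.induce (↑D : Set α)).edgeSet).ncard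

/-!
If `u ∈ D` has no private neighbor, then for any neighbor `w` of `u` the set
`D - u + w` still dominates. When `u` has a neighbor in `D`, taking `w` there gives the dominating
set `D - u`, contradicting minimality. Otherwise `u` is isolated in `G[D]`, a neighbor `w ∉ D` of `u` is not private, so it
has a neighbor `z ∈ D - u`, and `D - u + w` is a minimum dominating set inducing the extra edge
`zw`, contradicting maximality.
-/

section

variable {α : Type*} {G : SimpleGraph α}

theorem gamma_le_card {D : Finset α} (hD : Dominates G D) : gamma G ≤ D.card :=
  Nat.sInf_le ⟨D, hD, rfl⟩

theorem exists_mem_ne_adj_of_not_privateNbr {D : Finset α} {u v : α} (hv : v ∉ D)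
    (huv : G.Adj u v) (h : ¬PrivateNbr G D u v) : ∃ x ∈ D, x ≠ u ∧ G.Adj x v := by
  simpa [PrivateNbr, hv, huv, and_comm] using h

theorem Dominates.insert_erase [DecidableEq α] {D : Finset α} {u w : α} (hD : Dominates G D)
    (hwu : G.Adj w u) (hu : ∀ v, ¬PrivateNbr G D u v) : Dominates G (insert w (D.erase u)) := by
  intro v hv
  simp only [Finset.mem_insert, Finset.mem_erase, not_or, not_and_or, not_not] at hv
  obtain ⟨-, rfl | hvD⟩ := hv
  · exact ⟨w, Finset.mem_insert_self _ _, hwu⟩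
  obtain ⟨x, hxD, hxv⟩ := hD v hvD
  obtain ⟨y, hyD, hyu, hyv⟩ : ∃ y ∈ D, y ≠ u ∧ G.Adj y v := by
    by_cases hxu : x = u
    · exact exists_mem_ne_adj_of_not_privateNbr hvD (hxu ▸ hxv) (hu v)
    · exact ⟨x, hxD, hxu, hxv⟩
  exact ⟨y, Finset.mem_insert_of_mem (Finset.mem_erase.2 ⟨hyu, hyD⟩), hyv⟩

theorem inducedEdges_eq_ncard_inter_sym2 (G : SimpleGraph α) (S : Finset α) :
    inducedEdges G S = (G.edgeSet ∩ ↑S.sym2).ncard := by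
  rw [inducedEdges, ← Set.ncard_image_of_injective _ (Sym2.map.injective Subtype.val_injective)]
  congr 1
  ext e
  constructor
  · rintro ⟨e', he', rfl⟩
    induction e' with
    | _ x y => simpa using he'
  · induction e with
    | _ a b =>
      rintro ⟨hab, hS⟩
      rw [Finset.mem_coe, Finset.mk_mem_sym2_iff] at hS
      exact ⟨s(⟨a, hS.1⟩, ⟨b, hS.2⟩), hab, rfl⟩

theorem inducedEdges_erase_of_forall_not_adj [DecidableEq α] {S : Finset α} {u : α}
    (hu : ∀ x ∈ S, ¬G.Adj x u) : inducedEdges G (S.erase u) = inducedEdges G S := by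
  simp only [inducedEdges_eq_ncard_inter_sym2]
  congr 1
  ext e
  induction e with
  | _ a b =>
    simp only [Set.mem_inter_iff, SimpleGraph.mem_edgeSet, Finset.mem_coe, Finset.mk_mem_sym2_iff,
      Finset.mem_erase]
    constructor
    · rintro ⟨hab, ⟨-, ha⟩, -, hb⟩
      exact ⟨hab, ha, hb⟩
    · rintro ⟨hab, ha, hb⟩
      exact ⟨hab, ⟨fun h => hu b hb (h ▸ hab.symm), ha⟩, fun h => hu a ha (h ▸ hab), hb⟩

theorem inducedEdges_lt_insert [DecidableEq α] {S : Finset α} {w z : α} (hw : w ∉ S)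
    (hz : z ∈ S) (hzw : G.Adj z w) : inducedEdges G S < inducedEdges G (insert w S) := by
  simp only [inducedEdges_eq_ncard_inter_sym2]
  refine Set.ncard_lt_ncard ?_ ((insert w S).sym2.finite_toSet.subset Set.inter_subset_right)
  have hsub : G.edgeSet ∩ ↑S.sym2 ⊆ G.edgeSet ∩ ↑(insert w S).sym2 :=
    Set.inter_subset_inter_right _ <|
      Finset.coe_subset.2 (Finset.sym2_mono (Finset.subset_insert w S))
  refine (Set.ssubset_iff_of_subset hsub).2 ⟨s(z, w), ?_, ?_⟩
  · simp [hzw, hz]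
  · simp [hw]

end

theorem canonical_of_max_induced_edges_general {α : Type*}
    (G : SimpleGraph α) (hG : ∀ v : α, ∃ w : α, G.Adj v w)
    (D : Finset α) (hdom : Dominates G D) (hmin : D.card = gamma G)
    (hmax : ∀ D' : Finset α, Dominates G D' → D'.card = gamma G →
      inducedEdges G D' ≤ inducedEdges G D) :
    ∀ u ∈ D, ∃ v : α, PrivateNbr G D u v := by
  classical
  intro u hu
  by_contra! hpriv
  by_cases hDu : ∃ x ∈ D, G.Adj x u
  · obtain ⟨x, hxD, hxu⟩ := hDu
    have hle := gamma_le_card (hdom.insert_erase hxu hpriv)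
    rw [Finset.insert_eq_of_mem (Finset.mem_erase.2 ⟨hxu.ne, hxD⟩)] at hle
    have := Finset.card_erase_lt_of_mem hu
    omega
  push Not at hDu
  obtain ⟨w, huw⟩ := hG u
  have hwD : w ∉ D := fun h => hDu w h huw.symm
  obtain ⟨z, hzD, hzu, hzw⟩ := exists_mem_ne_adj_of_not_privateNbr hwD huw (hpriv w)
  have hcard : (insert w (D.erase u)).card = gamma G := by
    rw [Finset.card_insert_of_notMem (fun h => hwD (Finset.mem_of_mem_erase h)),
      Finset.card_erase_add_one hu, hmin]
  have hlt : inducedEdges G D < inducedEdges G (insert w (D.erase u)) := by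
    rw [← inducedEdges_erase_of_forall_not_adj hDu]
    exact inducedEdges_lt_insert (fun h => hwD (Finset.mem_of_mem_erase h))
      (Finset.mem_erase.2 ⟨hzu, hzD⟩) hzw
  exact hlt.not_ge (hmax _ (hdom.insert_erase huw.symm hpriv) hcard)

/-- A minimum dominating set maximizing the number of induced edges among all minimum
dominating sets is canonical: every member has a private neighbor. -/
theorem canonical_of_max_induced_edges {α : Type*} [Fintype α]
    (G : SimpleGraph α) (hG : ∀ v : α, ∃ w : α, G.Adj v w)
    (D : Finset α) (hdom : Dominates G D) (hmin : D.card = gamma G)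
    (hmax : ∀ D' : Finset α, Dominates G D' → D'.card = gamma G →
      inducedEdges G D' ≤ inducedEdges G D) :
    ∀ u ∈ D, ∃ v : α, PrivateNbr G D u v :=
  canonical_of_max_induced_edges_general G hG D hdom hmin hmax
end

section
/- Let G and H be finite simple graphs without isolated vertices, let D_G ⊆ V(G) and D_H ⊆ V(H) be canonical dominating sets, and let F_G, F_H be adjacency-respecting surjections from V(G) − D_G onto D_G and from V(H) − D_H onto D_H respectively. Then D_G × D_H is a dominating set of the adjoint graph A_{G,H}[F_G,F_H]. -/
/-- The map `S` on `V(G □ H) − D_G × D_H`: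
`S(u,v) = (u, F_H v)` if `u ∈ D_G` (and then necessarily `v ∉ D_H`),
`S(u,v) = (F_G u, v)` if `u ∉ D_G` and `v ∈ D_H`, and
`S(u,v) = (F_G u, F_H v)` if `u ∉ D_G` and `v ∉ D_H`. -/
def Svert {α β : Type*} [DecidableEq α] [DecidableEq β] (DG : Finset α) (DH : Finset β)
    (FG : α → α) (FH : β → β) (p : α × β) : α × β :=
  if p.1 ∈ DG then (p.1, FH p.2)
  else if p.2 ∈ DH then (FG p.1, p.2)
  else (FG p.1, FH p.2)

/-- The adjoint graph `A_{G,H}[F_G,F_H]`: the Cartesian product `G □ H` together with the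
added edges `E_S = {{(u,v), (F_G u, F_H v)} : u ∉ D_G, v ∉ D_H}`. -/
def adjointGraph {α β : Type*} (G : SimpleGraph α) (H : SimpleGraph β)
    (DG : Finset α) (DH : Finset β) (FG : α → α) (FH : β → β) : SimpleGraph (α × β) :=
  G.boxProd H ⊔ SimpleGraph.fromRel (fun p q => p.1 ∉ DG ∧ p.2 ∉ DH ∧ q = (FG p.1, FH p.2))

/-- `D_G × D_H` is a dominating set of the adjoint graph. -/
theorem prod_dominates_adjoint {α β : Type*} [Fintype α] [Fintype β] [DecidableEq α] [DecidableEq β]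
    (G : SimpleGraph α) (H : SimpleGraph β)
    (hG : ∀ v : α, ∃ w : α, G.Adj v w) (hH : ∀ v : β, ∃ w : β, H.Adj v w)
    (DG : Finset α) (DH : Finset β)
    (hDG : Dominates G DG) (hDH : Dominates H DH)
    (hcanG : Canonical G DG) (hcanH : Canonical H DH)
    (FG : α → α) (FH : β → β)
    (hFG : ∀ u ∉ DG, FG u ∈ DG ∧ G.Adj (FG u) u)
    (hFGsurj : ∀ w ∈ DG, ∃ u, u ∉ DG ∧ FG u = w)
    (hFH : ∀ v ∉ DH, FH v ∈ DH ∧ H.Adj (FH v) v)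
    (hFHsurj : ∀ w ∈ DH, ∃ v, v ∉ DH ∧ FH v = w) :
    Dominates (adjointGraph G H DG DH FG FH) (DG ×ˢ DH) := by
  rintro ⟨u, v⟩ hp
  rw [Finset.mem_product] at hp
  push_neg at hp
  by_cases hu : u ∈ DG
  · have hv : v ∉ DH := hp hu
    obtain ⟨h1, h2⟩ := hFH v hv
    exact ⟨(u, FH v), Finset.mem_product.mpr ⟨hu, h1⟩,
      Or.inl (SimpleGraph.boxProd_adj.mpr (Or.inr ⟨h2, rfl⟩))⟩
  · by_cases hv : v ∈ DH
    · obtain ⟨h1, h2⟩ := hFG u hu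
      exact ⟨(FG u, v), Finset.mem_product.mpr ⟨h1, hv⟩,
        Or.inl (SimpleGraph.boxProd_adj.mpr (Or.inl ⟨h2, rfl⟩))⟩
    · obtain ⟨h1, h2⟩ := hFG u hu
      obtain ⟨h3, h4⟩ := hFH v hv
      refine ⟨(FG u, FH v), Finset.mem_product.mpr ⟨h1, h3⟩, Or.inr ?_⟩
      have hne : ((u, v) : α × β) ≠ (FG u, FH v) := by
        intro h
        rw [Prod.mk.injEq] at h
        exact hu (h.1 ▸ h1)
      exact ⟨fun h => hne h.symm, Or.inr ⟨hu, hv, rfl⟩⟩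
end

section
/- Let G and H be finite simple graphs without isolated vertices, let D_G ⊆ V(G) and D_H ⊆ V(H) be canonical dominating sets, and let F_G, F_H be adjacency-respecting surjections from V(G) − D_G onto D_G and from V(H) − D_H onto D_H respectively. Then for every (u,v) ∈ D_G × D_H and every (x,y) ∈ P(u) × P(v), where P(u) and P(v) denote the sets of private neighbors of u in G and of v in H, the vertex (x,y) has no neighbor in (D_G × D_H) − {(u,v)} in the adjoint graph A_{G,H}[F_G,F_H]; consequently (D_G × D_H) − {(u,v)} does not dominate A_{G,H}[F_G,F_H]. -/
/-- Vertices in `P(u) × P(v)` have no neighbor in `(D_G × D_H) − {(u,v)}` in the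
adjoint graph; hence `(D_G × D_H) − {(u,v)}` does not dominate it. -/
theorem private_pair_not_dominated_by_erase {α β : Type*} [Fintype α] [Fintype β] [DecidableEq α] [DecidableEq β]
    (G : SimpleGraph α) (H : SimpleGraph β)
    (hG : ∀ v : α, ∃ w : α, G.Adj v w) (hH : ∀ v : β, ∃ w : β, H.Adj v w)
    (DG : Finset α) (DH : Finset β)
    (hDG : Dominates G DG) (hDH : Dominates H DH)
    (hcanG : Canonical G DG) (hcanH : Canonical H DH)
    (FG : α → α) (FH : β → β)
    (hFG : ∀ u ∉ DG, FG u ∈ DG ∧ G.Adj (FG u) u)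
    (hFGsurj : ∀ w ∈ DG, ∃ u, u ∉ DG ∧ FG u = w)
    (hFH : ∀ v ∉ DH, FH v ∈ DH ∧ H.Adj (FH v) v)
    (hFHsurj : ∀ w ∈ DH, ∃ v, v ∉ DH ∧ FH v = w) :
    ∀ u ∈ DG, ∀ v ∈ DH, ∀ (x : α) (y : β), PrivateNbr G DG u x → PrivateNbr H DH v y →
      (∀ w ∈ (DG ×ˢ DH).erase (u, v), ¬ (adjointGraph G H DG DH FG FH).Adj w (x, y)) ∧
      ¬ Dominates (adjointGraph G H DG DH FG FH) ((DG ×ˢ DH).erase (u, v)) := by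

  intro u hu v hv x y hx hy
  obtain ⟨hxD, hux, hxpriv⟩ := hx
  obtain ⟨hyD, hvy, hypriv⟩ := hy
  have key : ∀ w ∈ (DG ×ˢ DH).erase (u, v), ¬ (adjointGraph G H DG DH FG FH).Adj w (x, y) := by
    rintro ⟨a, b⟩ hw hadj
    obtain ⟨hne, hwD⟩ := Finset.mem_erase.mp hw
    rw [Finset.mem_product] at hwD
    rw [adjointGraph, SimpleGraph.sup_adj] at hadj
    rcases hadj with hbox | hrel
    · rw [SimpleGraph.boxProd_adj] at hbox
      rcases hbox with ⟨_, hb⟩ | ⟨_, ha⟩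
      · have hb' : b = y := hb
        exact hyD (hb' ▸ hwD.2)
      · have ha' : a = x := ha
        exact hxD (ha' ▸ hwD.1)
    · rw [SimpleGraph.fromRel_adj] at hrel
      obtain ⟨hne2, hr⟩ := hrel
      rcases hr with ⟨haD, _, _⟩ | ⟨hxD', hyD', heq⟩
    
      · exact haD hwD.1
      · have h1 := hFG x hxD
        have h2 := hFH y hyD
        have ha : a = FG x := by simpa using congrArg Prod.fst heq
        have hb : b = FH y := by simpa using congrArg Prod.snd heq
        have hau : a = u := hxpriv a hwD.1 (by rw [ha]; exact h1.2)
        have hbv : b = v := hypriv b hwD.2 (by rw [hb]; exact h2.2)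
        exact hne (by simp [hau, hbv])
  refine ⟨key, ?_⟩
  intro hdom
  have hxy : (x, y) ∉ (DG ×ˢ DH).erase (u, v) := fun h =>
    hxD (Finset.mem_product.mp (Finset.mem_of_mem_erase h)).1
  obtain ⟨w, hwD, hadj⟩ := hdom (x, y) hxy
  exact key w hwD hadj
end

section
/- Let G and H be finite simple graphs without isolated vertices, let D_G ⊆ V(G) and D_H ⊆ V(H) be canonical dominating sets, and let F_G, F_H be adjacency-respecting surjections from V(G) − D_G onto D_G and from V(H) − D_H onto D_H respectively. Then D_G × D_H is a minimal dominating set of the adjoint graph A_{G,H}[F_G,F_H]: it dominates A_{G,H}[F_G,F_H] and no proper subset of it does. -/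
/-- `D_G × D_H` is a minimal dominating set of the adjoint graph: it dominates it and no
proper subset of it does. -/
theorem prod_minimal_dominating_adjoint {α β : Type*} [Fintype α] [Fintype β] [DecidableEq α] [DecidableEq β]
    (G : SimpleGraph α) (H : SimpleGraph β)
    (hG : ∀ v : α, ∃ w : α, G.Adj v w) (hH : ∀ v : β, ∃ w : β, H.Adj v w)
    (DG : Finset α) (DH : Finset β)
    (hDG : Dominates G DG) (hDH : Dominates H DH)
    (hcanG : Canonical G DG) (hcanH : Canonical H DH)
    (FG : α → α) (FH : β → β)
    (hFG : ∀ u ∉ DG, FG u ∈ DG ∧ G.Adj (FG u) u)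
    (hFGsurj : ∀ w ∈ DG, ∃ u, u ∉ DG ∧ FG u = w)
    (hFH : ∀ v ∉ DH, FH v ∈ DH ∧ H.Adj (FH v) v)
    (hFHsurj : ∀ w ∈ DH, ∃ v, v ∉ DH ∧ FH v = w) :
    Dominates (adjointGraph G H DG DH FG FH) (DG ×ˢ DH) ∧
      ∀ D' : Finset (α × β), D' ⊂ DG ×ˢ DH →
        ¬ Dominates (adjointGraph G H DG DH FG FH) D' := by
  have adjoint_adj : ∀ p q : α × β, (adjointGraph G H DG DH FG FH).Adj p q ↔
      (G.boxProd H).Adj p q ∨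
        (p ≠ q ∧ ((p.1 ∉ DG ∧ p.2 ∉ DH ∧ q = (FG p.1, FH p.2)) ∨
          (q.1 ∉ DG ∧ q.2 ∉ DH ∧ p = (FG q.1, FH q.2)))) := by
    intro p q
    simp [adjointGraph, SimpleGraph.fromRel_adj]
  constructor
  · rintro ⟨u, v⟩ hp
    rw [Finset.mem_product, not_and_or] at hp
    by_cases hu : u ∈ DG
    · have hv : v ∉ DH := by tauto
      obtain ⟨hm, hadj⟩ := hFH v hv
      refine ⟨(u, FH v), Finset.mem_product.2 ⟨hu, hm⟩, ?_⟩
      exact Or.inl (SimpleGraph.boxProd_adj.2 (Or.inr ⟨hadj, rfl⟩))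
    · by_cases hv : v ∈ DH
      · obtain ⟨hm, hadj⟩ := hFG u hu
        exact ⟨(FG u, v), Finset.mem_product.2 ⟨hm, hv⟩,
          Or.inl (SimpleGraph.boxProd_adj.2 (Or.inl ⟨hadj, rfl⟩))⟩
      · obtain ⟨hm1, _⟩ := hFG u hu
        obtain ⟨hm2, _⟩ := hFH v hv
        refine ⟨(FG u, FH v), Finset.mem_product.2 ⟨hm1, hm2⟩, ?_⟩
        rw [adjoint_adj]
        refine Or.inr ⟨?_, Or.inr ⟨hu, hv, rfl⟩⟩
        intro h
        exact hu ((Prod.mk.injEq _ _ _ _ ▸ h).1 ▸ hm1)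
  · intro D' hsub hdom
    obtain ⟨ab, habmem, habD'⟩ := Finset.exists_of_ssubset hsub
    obtain ⟨a, b⟩ := ab
    obtain ⟨ha, hb⟩ := Finset.mem_product.1 habmem
    obtain ⟨x, hxD, hax, hpriv⟩ := hcanG a ha
    have hxb : (x, b) ∉ D' := fun h => hxD (Finset.mem_product.1 (hsub.1 h)).1
    obtain ⟨⟨u, v⟩, huvD', hadj⟩ := hdom (x, b) hxb
    have huvmem := hsub.1 huvD'
    obtain ⟨hu, hv⟩ := Finset.mem_product.1 huvmem
    rw [adjoint_adj] at hadj
    rcases hadj with hbox | ⟨hne, hrel⟩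
    · rcases SimpleGraph.boxProd_adj.1 hbox with ⟨hadj1, heq⟩ | ⟨hadj2, heq⟩
      · have : u = a := hpriv u hu hadj1
        subst this; subst heq
        exact habD' huvD'
      · have : u = x := heq
        exact hxD (this ▸ hu)
    · rcases hrel with ⟨h1, _⟩ | ⟨h1, h2, _⟩
      · exact h1 hu
      · exact h2 hb
end

section
/- Let G and H be finite simple graphs without isolated vertices, let D_G ⊆ V(G) and D_H ⊆ V(H) be canonical minimum dominating sets (so |D_G| = γ(G) and |D_H| = γ(H)), and let F_G, F_H be adjacency-respecting surjections from V(G) − D_G onto D_G and from V(H) − D_H onto D_H respectively. If D_G × D_H is a minimum dominating set of the adjoint graph A_{G,H}[F_G,F_H], i.e. γ(A_{G,H}[F_G,F_H]) = |D_G × D_H|, then γ(G)·γ(H) ≤ γ(G□H). -/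
/-- If `D_G × D_H` is a minimum dominating set of the adjoint graph, then
`γ(G)·γ(H) ≤ γ(G □ H)`. -/
theorem vizing_of_prod_minimum_dominating {α β : Type*} [Fintype α] [Fintype β] [DecidableEq α] [DecidableEq β]
    (G : SimpleGraph α) (H : SimpleGraph β)
    (hG : ∀ v : α, ∃ w : α, G.Adj v w) (hH : ∀ v : β, ∃ w : β, H.Adj v w)
    (DG : Finset α) (DH : Finset β)
    (hDG : Dominates G DG) (hDH : Dominates H DH)
    (hcanG : Canonical G DG) (hcanH : Canonical H DH)
    (FG : α → α) (FH : β → β)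
    (hFG : ∀ u ∉ DG, FG u ∈ DG ∧ G.Adj (FG u) u)
    (hFGsurj : ∀ w ∈ DG, ∃ u, u ∉ DG ∧ FG u = w)
    (hFH : ∀ v ∉ DH, FH v ∈ DH ∧ H.Adj (FH v) v)
    (hFHsurj : ∀ w ∈ DH, ∃ v, v ∉ DH ∧ FH v = w)
    (hminG : DG.card = gamma G) (hminH : DH.card = gamma H)
    (hprodDom : Dominates (adjointGraph G H DG DH FG FH) (DG ×ˢ DH))
    (hprodMin : gamma (adjointGraph G H DG DH FG FH) = (DG ×ˢ DH).card) :
    gamma G * gamma H ≤ gamma (G.boxProd H) := by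
  have key : gamma (adjointGraph G H DG DH FG FH) ≤ gamma (G.boxProd H) := by
    have hne : {n : ℕ | ∃ D : Finset (α × β), Dominates (G.boxProd H) D ∧ D.card = n}.Nonempty :=
      ⟨(Finset.univ : Finset (α × β)).card, Finset.univ,
        fun v hv => absurd (Finset.mem_univ v) hv, rfl⟩
    obtain ⟨D, hD, hcard⟩ := Nat.sInf_mem hne
    refine le_trans (Nat.sInf_le ?_) (le_of_eq hcard)
    exact ⟨D, fun v hv => by
      obtain ⟨u, hu, hadj⟩ := hD v hv
      exact ⟨u, hu, Or.inl hadj⟩, rfl⟩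
  calc gamma G * gamma H = (DG ×ˢ DH).card := by
        rw [Finset.card_product, hminG, hminH]
      _ = gamma (adjointGraph G H DG DH FG FH) := hprodMin.symm
      _ ≤ gamma (G.boxProd H) := key
end

section
/- Let G and H be finite simple graphs without isolated vertices, let D_G ⊆ V(G) and D_H ⊆ V(H) be canonical dominating sets, and let F_G, F_H be adjacency-respecting surjections from V(G) − D_G onto D_G and from V(H) − D_H onto D_H respectively. Then γ(A_{G,H}[F_G,F_H]) ≤ |D_G|·|D_H|; in particular, if |D_G| = γ(G) and |D_H| = γ(H), then γ(A_{G,H}[F_G,F_H]) ≤ γ(G)·γ(H). -/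
/-- `γ(A_{G,H}[F_G,F_H]) ≤ |D_G|·|D_H|`; in particular, if the dominating sets are
minimum, `γ(A_{G,H}[F_G,F_H]) ≤ γ(G)·γ(H)`. -/
theorem gamma_adjoint_le {α β : Type*} [Fintype α] [Fintype β] [DecidableEq α] [DecidableEq β]
    (G : SimpleGraph α) (H : SimpleGraph β)
    (hG : ∀ v : α, ∃ w : α, G.Adj v w) (hH : ∀ v : β, ∃ w : β, H.Adj v w)
    (DG : Finset α) (DH : Finset β)
    (hDG : Dominates G DG) (hDH : Dominates H DH)
    (hcanG : Canonical G DG) (hcanH : Canonical H DH)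
    (FG : α → α) (FH : β → β)
    (hFG : ∀ u ∉ DG, FG u ∈ DG ∧ G.Adj (FG u) u)
    (hFGsurj : ∀ w ∈ DG, ∃ u, u ∉ DG ∧ FG u = w)
    (hFH : ∀ v ∉ DH, FH v ∈ DH ∧ H.Adj (FH v) v)
    (hFHsurj : ∀ w ∈ DH, ∃ v, v ∉ DH ∧ FH v = w) :
    gamma (adjointGraph G H DG DH FG FH) ≤ DG.card * DH.card ∧
      (DG.card = gamma G → DH.card = gamma H →
        gamma (adjointGraph G H DG DH FG FH) ≤ gamma G * gamma H) := by
  have hdom : Dominates (adjointGraph G H DG DH FG FH) (DG ×ˢ DH) := by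
    intro p hp
    rw [Finset.mem_product] at hp
    push_neg at hp
    by_cases h1 : p.1 ∈ DG
    · have h2 : p.2 ∉ DH := hp h1
      obtain ⟨hmem, hadj⟩ := hFH p.2 h2
      refine ⟨(p.1, FH p.2), Finset.mem_product.2 ⟨h1, hmem⟩, Or.inl ?_⟩
      exact Or.inr ⟨hadj, rfl⟩
    · obtain ⟨hmem, hadj⟩ := hFG p.1 h1
      by_cases h2 : p.2 ∈ DH
      · refine ⟨(FG p.1, p.2), Finset.mem_product.2 ⟨hmem, h2⟩, Or.inl ?_⟩
        exact Or.inl ⟨hadj, rfl⟩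
      · obtain ⟨hmem2, hadj2⟩ := hFH p.2 h2
        refine ⟨(FG p.1, FH p.2), Finset.mem_product.2 ⟨hmem, hmem2⟩, Or.inr ?_⟩
        refine ⟨?_, Or.inr ⟨h1, h2, rfl⟩⟩
        intro he
        exact h1 ((congrArg Prod.fst he) ▸ hmem)
  have hle : gamma (adjointGraph G H DG DH FG FH) ≤ DG.card * DH.card := by
    have := Nat.sInf_le (s := {n : ℕ | ∃ D : Finset (α × β),
        Dominates (adjointGraph G H DG DH FG FH) D ∧ D.card = n})
      ⟨DG ×ˢ DH, hdom, Finset.card_product DG DH⟩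
    exact this
  exact ⟨hle, fun h1 h2 => by rw [← h1, ← h2]; exact hle⟩
end
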